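/- Let n ≥ 1, let r be a positive integer, and for 1 ≤ i ≤ n+1 let a_i, r_i, s_i be positive integers with a_i · r = r_i · s_i. Let k_1, ..., k_{n+1} be integers with Σ_{i=1}^{n+1} k_i = 0, and let p be an integer with 0 ≤ p ≤ n. Then Σ_{i=1}^{n} (a_i / r_i) · ⌊k_i / s_i⌋ + (a_{n+1} / r_{n+1}) · ⌊(k_{n+1} − p) / s_{n+1}⌋ ≥ − Σ_{i=1}^{n+1} a_i / r_i + 1/r, where ⌊·⌋ denotes the floor function and all fractions are rational numbers. -/

import Mathlib

/-!
Since `a i / (ri i * s i) = 1 / r`, the estimate `⌊x / s⌋ ≥ (x - s + 1) / s` gives the termwise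
bound `(a / ri) * ⌊x / s⌋ ≥ (x + 1) / r - a / ri`. Summing it over all indices, the `k i` cancel
because `∑ k i = 0`, leaving `(n + 1 - p) / r - ∑ a i / ri i`, and `p ≤ n` finishes.
-/

section

variable {K : Type*} [Field K] [LinearOrder K] [IsStrictOrderedRing K] [FloorRing K]

theorem Int.sub_add_one_div_le_floor_intCast_div (x s : ℤ) (hs : 0 < s) :
    ((x - s + 1 : ℤ) : K) / s ≤ ⌊(x : K) / s⌋ := by
  have hsK : (0 : K) < s := by exact_mod_cast hs
  have hltK : (x : K) < s * (⌊(x : K) / s⌋ + 1) := by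
    rw [← div_lt_iff₀' hsK]
    exact Int.lt_floor_add_one _
  have hlt : x < s * (⌊(x : K) / s⌋ + 1) := by exact_mod_cast hltK
  rw [div_le_iff₀ hsK, mul_comm]
  exact_mod_cast (by linarith : x - s + 1 ≤ s * ⌊(x : K) / s⌋)

theorem add_one_div_sub_div_le_div_mul_floor_div {a b s r : ℤ} (ha : 0 ≤ a) (hb : 0 < b)
    (hs : 0 < s) (hr : r ≠ 0) (hrel : a * r = b * s) (x : ℤ) :
    ((x : K) + 1) / r - a / b ≤ a / b * ⌊(x : K) / s⌋ := by
  have hsK : (s : K) ≠ 0 := by exact_mod_cast hs.ne'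
  have hbK : (b : K) ≠ 0 := by exact_mod_cast hb.ne'
  have hrK : (r : K) ≠ 0 := by exact_mod_cast hr
  have hrelK : (a : K) * r = b * s := by exact_mod_cast hrel
  have hab : (a : K) / b = s / r := by
    rw [div_eq_div_iff hbK hrK, hrelK, mul_comm]
  calc ((x : K) + 1) / r - a / b = a / b * (((x - s + 1 : ℤ) : K) / s) := by
        rw [hab]
        push_cast
        field_simp
        ring
    _ ≤ a / b * ⌊(x : K) / s⌋ := by
        gcongr
        exact Int.sub_add_one_div_le_floor_intCast_div x s hs

end

theorem stmt_4_general (n : ℕ) (r : ℤ) (hr : 0 < r)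
    (a ri s : Fin (n + 1) → ℤ)
    (ha : ∀ i, 0 < a i) (hri : ∀ i, 0 < ri i) (hs : ∀ i, 0 < s i)
    (hrel : ∀ i, a i * r = ri i * s i)
    (k : Fin (n + 1) → ℤ) (hk : ∑ i, k i = 0)
    (p : ℤ) (hpn : p ≤ n) :
    (∑ i : Fin n, ((a i.castSucc : ℚ) / (ri i.castSucc : ℚ)) *
        (⌊(k i.castSucc : ℚ) / (s i.castSucc : ℚ)⌋ : ℚ)) +
      ((a (Fin.last n) : ℚ) / (ri (Fin.last n) : ℚ)) *
        (⌊((k (Fin.last n) : ℚ) - (p : ℚ)) / (s (Fin.last n) : ℚ)⌋ : ℚ) ≥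
      -(∑ i, (a i : ℚ) / (ri i : ℚ)) + 1 / (r : ℚ) := by
  have hbound (i : Fin (n + 1)) (x : ℤ) :=
    add_one_div_sub_div_le_div_mul_floor_div (K := ℚ) (ha i).le (hri i) (hs i) hr.ne' (hrel i) x
  have hinit := Finset.sum_le_sum (s := Finset.univ) fun (i : Fin n) _ =>
    hbound i.castSucc (k i.castSucc)
  simp only [Finset.sum_sub_distrib, ← Finset.sum_div, Finset.sum_add_distrib, Finset.sum_const,
    Finset.card_univ, Fintype.card_fin, nsmul_eq_mul, mul_one] at hinit
  have hlast := hbound (Fin.last n) (k (Fin.last n) - p)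
  push_cast at hlast
  have hkQ : ∑ i : Fin n, (k i.castSucc : ℚ) + k (Fin.last n) = 0 := by
    rw [← Fin.sum_univ_castSucc (fun i => (k i : ℚ))]
    exact_mod_cast hk
  have hsum : (∑ i : Fin n, (k i.castSucc : ℚ) + n) / r + ((k (Fin.last n) : ℚ) - p + 1) / r
      = (n + 1 - p) / r := by
    rw [← add_div]
    congr 1
    linarith
  have hpQ : (p : ℚ) ≤ n := by exact_mod_cast hpn
  have hrQ : (0 : ℚ) < r := by exact_mod_cast hr
  have hgap : 1 / (r : ℚ) ≤ (n + 1 - p) / r := by gcongr; linarith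
  rw [Fin.sum_univ_castSucc]
  linarith

/-- The key estimate in the proof of Theorem 3.5(5). -/
theorem stmt_4 (n : ℕ) (hn : 1 ≤ n) (r : ℤ) (hr : 0 < r)
    (a ri s : Fin (n + 1) → ℤ)
    (ha : ∀ i, 0 < a i) (hri : ∀ i, 0 < ri i) (hs : ∀ i, 0 < s i)
    (hrel : ∀ i, a i * r = ri i * s i)
    (k : Fin (n + 1) → ℤ) (hk : ∑ i, k i = 0)
    (p : ℤ) (hp0 : 0 ≤ p) (hpn : p ≤ n) :
    (∑ i : Fin n, ((a i.castSucc : ℚ) / (ri i.castSucc : ℚ)) *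
        (⌊(k i.castSucc : ℚ) / (s i.castSucc : ℚ)⌋ : ℚ)) +
      ((a (Fin.last n) : ℚ) / (ri (Fin.last n) : ℚ)) *
        (⌊((k (Fin.last n) : ℚ) - (p : ℚ)) / (s (Fin.last n) : ℚ)⌋ : ℚ) ≥
      -(∑ i, (a i : ℚ) / (ri i : ℚ)) + 1 / (r : ℚ) :=
  stmt_4_general n r hr a ri s ha hri hs hrel k hk p hpn
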